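/- arXiv:1503.01419 — 7 statements merged into one kernel-verified Lean document; each statement's English description precedes it below -/
import Mathlib

section
/- Let p be a prime and let f ∈ F_p[x,y,z] be a homogeneous cubic defining an elliptic curve C ⊆ P²_{F_p}. Then C is ordinary if and only if f has level one, i.e., if and only if I_1(f^{p−1}) is the unit ideal of F_p[x,y,z]. -/
/-!
Over `𝔽_p` every `g` decomposes uniquely as `g = ∑_a g_a^p x^a` over the exponent vectors with
all `a_i < p`. The map `g ↦ g_a` is additive and satisfies `(h^p g)_a = h g_a`, so `g ∈ J^[p]`
forces `g_a ∈ J` for every `a`. For `a = (p-1, …, p-1)` and `g` homogeneous of degree `∑ a_i`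
(e.g. `g = f^(p-1)` with `f` a cubic in three variables), degree counting makes `g_a` the constant
`coeff a g`; if it is nonzero, every such `J` contains a unit. If it vanishes, every monomial of
`g` has an exponent `≥ p`, so `g ∈ 𝔪^[p]` for the homogeneous maximal ideal `𝔪` and `I_1(g) ⊆ 𝔪`.
-/

open MvPolynomial

/-- `J^[q]`: the ideal generated by the `q`-th powers of the elements of `J`. -/
def bracketPow {R : Type*} [CommRing R] (q : ℕ) (J : Ideal R) : Ideal R :=
  Ideal.span ((fun a => a ^ q) '' (J : Set R))

/-- `I_e(g)` (for the prime `p`): the smallest ideal `J` with `g ∈ J^[p^e]`. -/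
def rootIdeal {R : Type*} [CommRing R] (p e : ℕ) (g : R) : Ideal R :=
  sInf {J : Ideal R | g ∈ bracketPow (p ^ e) J}

/-- `f` has level `e`: `e` is the least integer `≥ 1` such that
`f^(p^e - p) ∈ (I_e(f^(p^e - 1)))^[p^e]`. -/
def HasLevel {R : Type*} [CommRing R] (p : ℕ) (f : R) (e : ℕ) : Prop :=
  IsLeast {e' : ℕ | 1 ≤ e' ∧
    f ^ (p ^ e' - p) ∈ bracketPow (p ^ e') (rootIdeal p e' (f ^ (p ^ e' - 1)))} e

/-- The exponent vector `(r, s, t)` of a monomial in three variables. -/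
noncomputable def expv (r s t : ℕ) : Fin 3 →₀ ℕ := Finsupp.equivFunOnFinite.symm ![r, s, t]

namespace Finsupp

variable {σ : Type*}

lemma injective_nsmul_add {p : ℕ} (hp : p ≠ 0) (a : σ →₀ ℕ) :
    Function.Injective fun e : σ →₀ ℕ => p • e + a :=
  (add_left_injective a).comp (smul_right_injective _ hp)

lemma nsmul_le_nsmul_add_iff {p : ℕ} {a : σ →₀ ℕ} (ha : ∀ i, a i < p) {u e : σ →₀ ℕ} :
    p • u ≤ p • e + a ↔ u ≤ e := by
  simp only [le_def, add_apply, smul_apply, smul_eq_mul]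
  refine forall_congr' fun i => ⟨fun h => ?_, fun h => ?_⟩
  · by_contra! hlt
    nlinarith [ha i]
  · nlinarith

lemma exists_le_apply_of_ne_of_degree_eq {q : ℕ} {a d : σ →₀ ℕ} (ha : ∀ i, a i = q - 1)
    (hne : d ≠ a) (hd : d.degree = a.degree) : ∃ i, q ≤ d i := by
  by_contra! hlt
  have hle : d ≤ a := fun i => (ha i).symm ▸ Nat.le_sub_one_of_lt (hlt i)
  obtain ⟨c, rfl⟩ := le_iff_exists_add.mp hle
  rw [map_add, left_eq_add, degree_eq_zero_iff] at hd
  exact hne (by simp [hd])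

end Finsupp

namespace MvPolynomial

variable {σ : Type*}

section FrobeniusComponent

variable {R : Type*} [CommSemiring R] (p : ℕ) [NeZero p]

/-- For `a_i < p`, the component `g_a` in the decomposition `g = ∑_a g_a^p x^a`. -/
noncomputable def frobeniusComponent (a : σ →₀ ℕ) : MvPolynomial σ R →+ MvPolynomial σ R :=
  AddMonoidAlgebra.coeffAddEquiv.symm.toAddMonoidHom.comp <|
    (Finsupp.comapDomain.addMonoidHom (Finsupp.injective_nsmul_add (NeZero.ne p) a)).comp
      AddMonoidAlgebra.coeffAddEquiv.toAddMonoidHom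

lemma coeff_frobeniusComponent (a e : σ →₀ ℕ) (g : MvPolynomial σ R) :
    coeff e (frobeniusComponent p a g) = coeff (p • e + a) g :=
  rfl

lemma frobeniusComponent_eq_C_of_isHomogeneous {a : σ →₀ ℕ} {g : MvPolynomial σ R}
    (hg : g.IsHomogeneous a.degree) : frobeniusComponent p a g = C (coeff a g) := by
  classical
  ext e
  rw [coeff_frobeniusComponent, coeff_C]
  split_ifs with he
  · simp [← he]
  · refine hg.coeff_eq_zero ?_
    have : e.degree ≠ 0 := fun h => he ((Finsupp.degree_eq_zero_iff e).mp h).symm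
    simp only [map_add, map_nsmul, smul_eq_mul]
    simpa [NeZero.ne p] using this

end FrobeniusComponent

variable {p : ℕ} [Fact p.Prime]

lemma frobeniusComponent_pow_mul {a : σ →₀ ℕ} (ha : ∀ i, a i < p)
    (h g : MvPolynomial σ (ZMod p)) :
    frobeniusComponent p a (h ^ p * g) = h * frobeniusComponent p a g := by
  induction h using MvPolynomial.induction_on' with
  | add h₁ h₂ ih₁ ih₂ => rw [add_pow_char, add_mul, map_add, ih₁, ih₂, add_mul]
  | monomial u c =>
    ext e
    rw [monomial_pow, ZMod.pow_card, coeff_frobeniusComponent, coeff_monomial_mul',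
      coeff_monomial_mul']
    by_cases hue : u ≤ e
    · rw [if_pos ((Finsupp.nsmul_le_nsmul_add_iff ha).mpr hue), if_pos hue,
        coeff_frobeniusComponent]
      congr 2
      ext i
      have := Nat.mul_le_mul_left p (hue i)
      simp only [Finsupp.tsub_apply, Finsupp.add_apply, Finsupp.smul_apply, smul_eq_mul,
        Nat.mul_sub]
      omega
    · rw [if_neg (mt (Finsupp.nsmul_le_nsmul_add_iff ha).mp hue), if_neg hue]

lemma frobeniusComponent_mem_of_mem_bracketPow {a : σ →₀ ℕ} (ha : ∀ i, a i < p)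
    {J : Ideal (MvPolynomial σ (ZMod p))} {g : MvPolynomial σ (ZMod p)}
    (hg : g ∈ bracketPow p J) : frobeniusComponent p a g ∈ J := by
  suffices ∀ r, frobeniusComponent p a (r * g) ∈ J by simpa using this 1
  induction hg using Submodule.span_induction with
  | mem _ hx =>
    obtain ⟨h, hh, rfl⟩ := hx
    intro r
    rw [mul_comm, frobeniusComponent_pow_mul ha]
    exact J.mul_mem_right _ hh
  | zero => simp
  | add _ _ _ _ ihx ihy =>
    intro r
    rw [mul_add, map_add]
    exact J.add_mem (ihx r) (ihy r)
  | smul c _ _ ih =>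
    intro r
    rw [smul_eq_mul, ← mul_assoc]
    exact ih (r * c)

lemma mem_bracketPow_ker_constantCoeff {R : Type*} [CommRing R] {q : ℕ} {g : MvPolynomial σ R}
    (hg : ∀ d ∈ g.support, ∃ i, q ≤ d i) :
    g ∈ bracketPow q (RingHom.ker (constantCoeff : MvPolynomial σ R →+* R)) := by
  rw [g.as_sum]
  refine Ideal.sum_mem _ fun d hd => ?_
  obtain ⟨i, hi⟩ := hg d hd
  have hXi : X i ^ q ∈ bracketPow q (RingHom.ker (constantCoeff : MvPolynomial σ R →+* R)) :=
    Ideal.subset_span ⟨X i, by simp, rfl⟩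
  have hsplit :
      monomial d (coeff d g) = monomial (d - Finsupp.single i q) (coeff d g) * X i ^ q := by
    rw [X_pow_eq_monomial, monomial_mul, mul_one,
      tsub_add_cancel_of_le (Finsupp.single_le_iff.mpr hi)]
  rw [hsplit]
  exact Ideal.mul_mem_left _ _ hXi

theorem rootIdeal_one_eq_top_iff {a : σ →₀ ℕ} (ha : ∀ i, a i = p - 1)
    {g : MvPolynomial σ (ZMod p)} (hg : g.IsHomogeneous a.degree) :
    rootIdeal p 1 g = ⊤ ↔ coeff a g ≠ 0 := by
  have ha_lt : ∀ i, a i < p := fun i => (ha i).trans_lt (Nat.sub_one_lt (NeZero.ne p))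
  rw [rootIdeal, sInf_eq_top, pow_one]
  refine ⟨fun htop hcoeff => RingHom.ker_ne_top constantCoeff (htop _ ?_), fun hcoeff J hJ => ?_⟩
  · refine mem_bracketPow_ker_constantCoeff fun d hd => ?_
    refine Finsupp.exists_le_apply_of_ne_of_degree_eq ha (by rintro rfl; simp_all) ?_
    by_contra hdeg
    exact mem_support_iff.mp hd (hg.coeff_eq_zero hdeg)
  · have hmem := frobeniusComponent_mem_of_mem_bracketPow ha_lt hJ
    rw [frobeniusComponent_eq_C_of_isHomogeneous p hg] at hmem
    exact Ideal.eq_top_of_isUnit_mem _ hmem (hcoeff.isUnit.map C)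

end MvPolynomial

theorem stmt_0_general (p : ℕ) [Fact p.Prime]
    (f : MvPolynomial (Fin 3) (ZMod p))
    (hcubic : f.IsHomogeneous 3) :
    coeff (expv (p - 1) (p - 1) (p - 1)) (f ^ (p - 1)) ≠ 0 ↔
      rootIdeal p 1 (f ^ (p - 1)) = ⊤ := by
  have hexpv : ∀ i, expv (p - 1) (p - 1) (p - 1) i = p - 1 := by
    intro i
    fin_cases i <;> rfl
  have hdeg : (expv (p - 1) (p - 1) (p - 1)).degree = 3 * (p - 1) := by
    simp [Finsupp.degree_eq_sum, hexpv]
  rw [rootIdeal_one_eq_top_iff hexpv (hdeg ▸ hcubic.pow (p - 1))]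

/-- An elliptic curve `C ⊆ ℙ²` over `𝔽_p` defined by a homogeneous cubic `f` is ordinary
(the coefficient of `(xyz)^(p-1)` in `f^(p-1)` is nonzero) if and only if `f` has level one,
i.e. `I_1(f^(p-1))` is the unit ideal. -/
theorem stmt_0 (p : ℕ) [Fact p.Prime]
    (f : MvPolynomial (Fin 3) (ZMod p))
    (hcubic : f.IsHomogeneous 3)
    (hsmooth : ∀ x : Fin 3 → AlgebraicClosure (ZMod p),
      eval x (map (algebraMap (ZMod p) (AlgebraicClosure (ZMod p))) f) = 0 →
      (∀ i, eval x (map (algebraMap (ZMod p) (AlgebraicClosure (ZMod p))) (pderiv i f)) = 0) →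
      x = 0) :
    coeff (expv (p - 1) (p - 1) (p - 1)) (f ^ (p - 1)) ≠ 0 ↔
      rootIdeal p 1 (f ^ (p - 1)) = ⊤ :=
  stmt_0_general p f hcubic
end

section
/- Let p ≥ 5 be a prime, let a, b ∈ F_p, and let f = y²z − x³ + axz² + bz³ ∈ F_p[x,y,z]. Then the coefficient of the monomial y^{2p²−2} z^{p²−1} in the expansion of f^{p²−1} equals 1, and for every triple (i,j,k) of nonnegative integers with (i,j,k) ≠ (0,1,0), the coefficient of the monomial x^{ip²} y^{jp² + (p²−2)} z^{kp² + (p²−1)} in f^{p²−1} equals 0. Equivalently, in the unique expansion f^{p²−1} = Σ_α g_α^{p²} x^α over exponent vectors α with all entries at most p²−1, one has g_{(0, p²−2, p²−1)} = y. -/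
open MvPolynomial

lemma expv_apply (r s t : ℕ) (i : Fin 3) : expv r s t i = ![r, s, t] i := rfl

lemma expv_eq_iff {r s t r' s' t' : ℕ} : expv r s t = expv r' s' t' ↔ r = r' ∧ s = s' ∧ t = t' := by
  constructor
  · intro h
    have h' := DFunLike.congr_fun h
    exact ⟨h' 0, h' 1, h' 2⟩
  · rintro ⟨rfl, rfl, rfl⟩; rfl

lemma monpow {R : Type*} [CommSemiring R] (A : ℕ) :
    ((X 1 : MvPolynomial (Fin 3) R) ^ 2 * X 2) ^ A = monomial (expv 0 (2*A) A) 1 := by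
  have h : (A • (Finsupp.single (1:Fin 3) 2 + Finsupp.single 2 1)) = expv 0 (2*A) A := by
    ext i; fin_cases i <;> simp [expv_apply, mul_comm]
  rw [X_pow_eq_monomial, ← pow_one (X 2 : MvPolynomial (Fin 3) R), X_pow_eq_monomial,
    monomial_mul, monomial_pow, one_mul, one_pow, h]

lemma yfree {R : Type*} [CommRing R] [Nontrivial R] (a b : R) (k : ℕ) (m : Fin 3 →₀ ℕ)
    (hm : m 1 ≠ 0) :
    coeff m (((-(X 0 ^ 3) + C a * X 0 * X 2 ^ 2 + C b * X 2 ^ 3 : MvPolynomial (Fin 3) R)) ^ k)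
      = 0 := by
  set g : MvPolynomial (Fin 3) R := -(X 0 ^ 3) + C a * X 0 * X 2 ^ 2 + C b * X 2 ^ 3 with hg
  by_contra h
  have hmem : m ∈ (g ^ k).support := mem_support_iff.2 h
  have h1 : (1 : Fin 3) ∈ (g ^ k).vars := (mem_vars _).2 ⟨m, hmem, Finsupp.mem_support_iff.2 hm⟩
  have h2 : (1 : Fin 3) ∈ g.vars := vars_pow g k h1
  have hsub : g.vars ⊆ {0, 2} := by
    refine (vars_add_subset _ _).trans (Finset.union_subset ((vars_add_subset _ _).trans
      (Finset.union_subset ?_ ?_)) ?_)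
    · rw [vars_neg]
      exact (vars_pow _ _).trans (by rw [vars_X]; simp)
    · refine (vars_mul _ _).trans (Finset.union_subset ((vars_mul _ _).trans
        (Finset.union_subset ?_ ?_)) ?_)
      · rw [vars_C]; exact Finset.empty_subset _
      · rw [vars_X]; simp
      · exact (vars_pow _ _).trans (by rw [vars_X]; simp)
    · refine (vars_mul _ _).trans (Finset.union_subset ?_ ?_)
      · rw [vars_C]; exact Finset.empty_subset _
      · exact (vars_pow _ _).trans (by rw [vars_X]; simp)
  have := hsub h2
  simp at this

lemma key {R : Type*} [CommRing R] [Nontrivial R] (a b : R) (n : ℕ) (m : Fin 3 →₀ ℕ)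
    (hm : ∀ A : ℕ, A < n → m 1 ≠ 2 * A) :
    coeff m ((X 1 ^ 2 * X 2 + (-(X 0 ^ 3) + C a * X 0 * X 2 ^ 2 + C b * X 2 ^ 3)
        : MvPolynomial (Fin 3) R) ^ n)
      = if m = expv 0 (2 * n) n then 1 else 0 := by
  set g : MvPolynomial (Fin 3) R := -(X 0 ^ 3) + C a * X 0 * X 2 ^ 2 + C b * X 2 ^ 3 with hg
  rw [add_pow, coeff_sum]
  rw [Finset.sum_eq_single_of_mem n (Finset.self_mem_range_succ n)]
  · rw [Nat.sub_self, pow_zero, Nat.choose_self, Nat.cast_one, mul_one, mul_one, monpow,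
      coeff_monomial]
    simp [eq_comm]
  · intro A hA hAn
    have hAlt : A < n := lt_of_le_of_ne (Nat.lt_succ_iff.1 (Finset.mem_range.1 hA)) hAn
    rw [monpow, ← C_eq_coe_nat, mul_comm _ (C ((n.choose A : ℕ) : R)), coeff_C_mul, coeff_monomial_mul']
    split
    · rename_i hle
      have h1 : (m - expv 0 (2*A) A) 1 ≠ 0 := by
        have := hle 1
        have h2 : expv 0 (2*A) A 1 = 2*A := rfl
        have h3 : (m - expv 0 (2*A) A) 1 = m 1 - 2*A := by
          rw [Finsupp.tsub_apply, h2]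
        rw [h3]
        have := hm A hAlt
        omega
      rw [yfree a b _ _ h1]
      ring
    · simp

lemma expv_one (r s t : ℕ) : expv r s t 1 = s := rfl

/-- For `p ≥ 5` prime and `f = y²z - x³ + axz² + bz³ ∈ 𝔽_p[x,y,z]`, the coefficient of
`y^(2p²-2) z^(p²-1)` in `f^(p²-1)` is `1`, and for every `(i,j,k) ≠ (0,1,0)` the coefficient
of `x^(ip²) y^(jp² + p²-2) z^(kp² + p²-1)` in `f^(p²-1)` is `0`; i.e., in the expansion
`f^(p²-1) = Σ g_α^(p²) x^α` one has `g_{(0, p²-2, p²-1)} = y`. -/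
theorem stmt_5 (p : ℕ) [Fact p.Prime] (hp5 : 5 ≤ p) (a b : ZMod p)
    (f : MvPolynomial (Fin 3) (ZMod p))
    (hf : f = (X 1) ^ 2 * X 2 - (X 0) ^ 3 + C a * X 0 * (X 2) ^ 2 + C b * (X 2) ^ 3) :
    coeff (expv 0 (2 * p ^ 2 - 2) (p ^ 2 - 1)) (f ^ (p ^ 2 - 1)) = 1 ∧
    ∀ i j k : ℕ, (i, j, k) ≠ (0, 1, 0) →
      coeff (expv (i * p ^ 2) (j * p ^ 2 + (p ^ 2 - 2)) (k * p ^ 2 + (p ^ 2 - 1)))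
        (f ^ (p ^ 2 - 1)) = 0 := by
  have hp : p.Prime := Fact.out
  have hodd : Odd (p ^ 2) := (hp.odd_of_ne_two (by omega)).pow
  obtain ⟨c, hc⟩ := hodd
  have hq : 25 ≤ p ^ 2 := by nlinarith
  have hfe : f = X 1 ^ 2 * X 2 + (-(X 0 ^ 3) + C a * X 0 * X 2 ^ 2 + C b * X 2 ^ 3) := by
    rw [hf]; ring
  constructor
  · rw [hfe, key a b]
    · rw [if_pos (expv_eq_iff.mpr ⟨rfl, by omega, rfl⟩)]
    · intro A hA
      rw [expv_one]
      omega
  · intro i j k hijk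
    rw [hfe, key a b]
    · rw [if_neg]
      intro h
      obtain ⟨h1, h2, h3⟩ := expv_eq_iff.mp h
      have hi : i = 0 := by
        rcases Nat.mul_eq_zero.mp h1 with h | h
        · exact h
        · omega
      have hk : k = 0 := by
        have : k * p ^ 2 = 0 := by omega
        rcases Nat.mul_eq_zero.mp this with h | h
        · exact h
        · omega
      have hj : j = 1 := by
        have hjq : j * p ^ 2 = 1 * p ^ 2 := by omega
        exact Nat.eq_of_mul_eq_mul_right (by omega) hjq
      exact hijk (by rw [hi, hj, hk])
    · intro A hA
      rw [expv_one]
      rcases Nat.even_or_odd j with ⟨d, hd⟩ | ⟨d, hd⟩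
      · have hjp : j * p ^ 2 = 2 * (d * p ^ 2) := by rw [hd]; ring
        omega
      · have hjp : j * p ^ 2 = 2 * (d * p ^ 2) + p ^ 2 := by rw [hd]; ring
        omega
end

section
/- Let k be a perfect field of prime characteristic p and let f = x₁^{a₁}⋯x_d^{a_d} ∈ k[x₁,…,x_d] be a monomial with every aᵢ > 0. Let a = max{a₁,…,a_d} and e = ⌈log_p(a)⌉ + 1. Then the level of f equals e, and I_e(f^{p^e−1}) is the principal ideal generated by x₁^{a₁−1}⋯x_d^{a_d−1}. -/
open MvPolynomial

/-!
Let `q = p ^ e` and let `w` be an exponent with all `w i < q`. The additive map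
`T_w : h ↦ ∑ᵥ (h_{q v + w})^{1/q} x^v` (`cartierMap p e w`) satisfies
`T_w (r g^q) = T_w(r) g`, hence maps `J^[q]` into `J`; as it sends `x^{q v + w}` to `x^v`,
this gives `I_e(x^{q v + w}) = (x^v)`. So `I_e(f^n) = (x^{⌊n a / q⌋})`, and the level
condition becomes coordinatewise `q ⌊(q - 1) aᵢ / q⌋ ≤ (q - p) aᵢ`, which holds iff
`p aᵢ ≤ q`, i.e. iff `a ≤ p^(e-1)`.
-/

theorem bracketPow_span_singleton {R : Type*} [CommRing R] (q : ℕ) (g : R) :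
    bracketPow q (Ideal.span {g}) = Ideal.span {g ^ q} := by
  refine le_antisymm (Ideal.span_le.2 ?_) (Ideal.span_le.2 ?_)
  · rintro _ ⟨h, hh, rfl⟩
    exact Ideal.mem_span_singleton.2 (pow_dvd_pow_of_dvd (Ideal.mem_span_singleton.1 hh) q)
  · exact Set.singleton_subset_iff.2
      (Ideal.subset_span ⟨g, Ideal.mem_span_singleton_self g, rfl⟩)

theorem Nat.sub_one_mul_div_of_le {q a : ℕ} (ha : a ≤ q) : (q - 1) * a / q = a - 1 := by
  rcases Nat.eq_zero_or_pos a with rfl | ha0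
  · simp
  have hsplit : (q - 1) * a = q * (a - 1) + (q - a) := by
    zify [ha, ha0, ha0.trans_le ha]
    ring
  rw [hsplit, Nat.mul_add_div (by omega), Nat.div_eq_of_lt (by omega), add_zero]

theorem Nat.mul_sub_one_mul_div_le_iff {p q a : ℕ} (hp : 2 ≤ p) (hpq : p ≤ q) :
    q * ((q - 1) * a / q) ≤ (q - p) * a ↔ p * a ≤ q := by
  have hpa : p * a ≤ q * a := Nat.mul_le_mul_right a hpq
  rcases le_or_gt a q with haq | hqa
  · rw [Nat.sub_one_mul_div_of_le haq, Nat.mul_sub_one, Nat.sub_mul]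
    rcases Nat.eq_zero_or_pos a with rfl | ha0
    · simp
    have : q ≤ q * a := Nat.le_mul_of_pos_right q ha0
    omega
  · have hdiv := Nat.div_add_mod ((q - 1) * a) q
    have hmod := Nat.mod_lt ((q - 1) * a) (by omega : 0 < q)
    have h2a : 2 * a ≤ p * a := Nat.mul_le_mul_right a hp
    rw [Nat.sub_one_mul] at hdiv hmod ⊢
    rw [Nat.sub_mul]
    omega

theorem Nat.clog_sup_lt_iff {ι : Type*} [Fintype ι] {p e : ℕ} (hp : 1 < p) (he : 1 ≤ e)
    (a : ι → ℕ) : Nat.clog p (Finset.univ.sup a) < e ↔ ∀ i, p * a i ≤ p ^ e := by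
  obtain ⟨e, rfl⟩ := Nat.exists_eq_add_of_le' he
  simp only [Nat.lt_succ_iff, Nat.clog_le_iff_le_pow hp, Finset.sup_le_iff, Finset.mem_univ,
    true_implies, pow_succ', Nat.mul_le_mul_left_iff (by omega : 0 < p)]

namespace Finsupp
variable {σ : Type*} {q : ℕ} {n v w : σ →₀ ℕ}

theorem smul_add_injective (hq : q ≠ 0) (w : σ →₀ ℕ) :
    Function.Injective fun v : σ →₀ ℕ => q • v + w :=
  (add_left_injective w).comp (smul_right_injective _ hq)

theorem smul_le_smul_add_iff (hw : ∀ i, w i < q) : q • n ≤ q • v + w ↔ n ≤ v := by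
  simp only [Finsupp.le_def, Finsupp.add_apply, Finsupp.smul_apply, smul_eq_mul]
  refine forall_congr' fun i => ⟨fun h => ?_, fun h => ?_⟩
  · exact Nat.le_of_lt_succ <| Nat.lt_of_mul_lt_mul_left <|
      h.trans_lt (by rw [Nat.mul_succ]; exact Nat.add_lt_add_left (hw i) _)
  · exact (Nat.mul_le_mul_left q h).trans (Nat.le_add_right _ _)

theorem smul_add_tsub_smul (h : n ≤ v) : q • v + w - q • n = q • (v - n) + w := by
  ext i
  have := Nat.mul_le_mul_left q (h i)
  simp only [Finsupp.add_apply, Finsupp.smul_apply, Finsupp.tsub_apply, smul_eq_mul,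
    Nat.mul_sub]
  omega

end Finsupp

namespace MvPolynomial
variable {σ k : Type*}

section Cartier
variable [CommRing k] (p : ℕ) [ExpChar k p] [PerfectRing k p]

noncomputable def cartierMap (e : ℕ) (w : σ →₀ ℕ) :
    MvPolynomial σ k →+ MvPolynomial σ k :=
  AddMonoidAlgebra.coeffAddEquiv.symm.toAddMonoidHom.comp <|
    (Finsupp.mapRange.addMonoidHom (iterateFrobeniusEquiv k p e).symm.toAddMonoidHom).comp <|
      (Finsupp.comapDomain.addMonoidHom
        (Finsupp.smul_add_injective (pow_ne_zero e (expChar_pos k p).ne') w)).comp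
        AddMonoidAlgebra.coeffAddEquiv.toAddMonoidHom

variable {p} {e : ℕ} {w : σ →₀ ℕ}

theorem coeff_cartierMap (v : σ →₀ ℕ) (h : MvPolynomial σ k) :
    coeff v (cartierMap p e w h) =
      (iterateFrobeniusEquiv k p e).symm (coeff (p ^ e • v + w) h) := by
  simp [cartierMap, coeff]

theorem cartierMap_monomial_smul_add (v : σ →₀ ℕ) :
    cartierMap p e w (monomial (p ^ e • v + w) (1 : k)) = monomial v 1 := by
  classical
  ext u
  simp only [coeff_cartierMap, coeff_monomial,
    (Finsupp.smul_add_injective (pow_ne_zero e (expChar_pos k p).ne') w).eq_iff]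
  split_ifs <;> simp

theorem cartierMap_mul_monomial_pow (hw : ∀ i, w i < p ^ e) (r : MvPolynomial σ k)
    (n : σ →₀ ℕ) (b : k) :
    cartierMap p e w (r * monomial n b ^ p ^ e) = cartierMap p e w r * monomial n b := by
  ext v
  rw [monomial_pow, coeff_cartierMap, coeff_mul_monomial', coeff_mul_monomial']
  by_cases hnv : n ≤ v
  · rw [if_pos ((Finsupp.smul_le_smul_add_iff hw).2 hnv), if_pos hnv, coeff_cartierMap,
      Finsupp.smul_add_tsub_smul hnv, map_mul, ← iterateFrobeniusEquiv_def,
      RingEquiv.symm_apply_apply]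
  · rw [if_neg (mt (Finsupp.smul_le_smul_add_iff hw).1 hnv), if_neg hnv, map_zero]

theorem cartierMap_mul_pow (hw : ∀ i, w i < p ^ e) (r g : MvPolynomial σ k) :
    cartierMap p e w (r * g ^ p ^ e) = cartierMap p e w r * g := by
  induction g using MvPolynomial.induction_on' with
  | monomial n b => exact cartierMap_mul_monomial_pow hw r n b
  | add g g' hg hg' => rw [add_pow_expChar_pow, mul_add, map_add, hg, hg', mul_add]

theorem cartierMap_mem_of_mem_bracketPow (hw : ∀ i, w i < p ^ e)
    {J : Ideal (MvPolynomial σ k)} {x : MvPolynomial σ k} (hx : x ∈ bracketPow (p ^ e) J) :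
    cartierMap p e w x ∈ J := by
  -- `cartierMap` is only additive, so a multiplier `r` is carried through the induction.
  suffices ∀ r, cartierMap p e w (r * x) ∈ J by simpa using this 1
  induction hx using Submodule.span_induction with
  | mem y hy =>
    obtain ⟨g, hg, rfl⟩ := hy
    intro r
    rw [cartierMap_mul_pow hw]
    exact J.mul_mem_left _ hg
  | zero => simp
  | add y z _ _ hy hz =>
    intro r
    rw [mul_add, map_add]
    exact J.add_mem (hy r) (hz r)
  | smul s y _ hy =>
    intro r
    rw [smul_eq_mul, ← mul_assoc]
    exact hy _

theorem rootIdeal_monomial_smul_add (v : σ →₀ ℕ) (hw : ∀ i, w i < p ^ e) :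
    rootIdeal p e (monomial (p ^ e • v + w) (1 : k)) = Ideal.span {monomial v 1} := by
  refine le_antisymm (sInf_le ?_) (le_sInf fun J hJ => ?_)
  · rw [Set.mem_ofPred_eq, bracketPow_span_singleton, monomial_pow, one_pow]
    exact Ideal.mem_span_singleton.2 (monomial_dvd_monomial.2 ⟨Or.inr le_self_add, one_dvd _⟩)
  · rw [Ideal.span_le, Set.singleton_subset_iff, SetLike.mem_coe,
      ← cartierMap_monomial_smul_add (p := p) (e := e) (w := w)]
    exact cartierMap_mem_of_mem_bracketPow hw hJ

theorem rootIdeal_monomial (e : ℕ) (m : σ →₀ ℕ) :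
    rootIdeal p e (monomial m (1 : k)) =
      Ideal.span {monomial (m.mapRange (· / p ^ e) (Nat.zero_div _)) 1} := by
  have hq : 0 < p ^ e := pow_pos (expChar_pos k p) e
  have hm : m = p ^ e • m.mapRange (· / p ^ e) (Nat.zero_div _) +
      m.mapRange (· % p ^ e) (Nat.zero_mod _) := by
    ext i; simp [Nat.div_add_mod]
  conv_lhs => rw [hm]
  exact rootIdeal_monomial_smul_add _ fun i => by simpa using Nat.mod_lt _ hq

theorem monomial_pow_mem_bracketPow_rootIdeal_iff [Nontrivial k] (e : ℕ) (m : σ →₀ ℕ)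
    (n n' : ℕ) :
    monomial m (1 : k) ^ n' ∈ bracketPow (p ^ e) (rootIdeal p e (monomial m (1 : k) ^ n)) ↔
      ∀ i, p ^ e * (n * m i / p ^ e) ≤ n' * m i := by
  simp only [monomial_pow, one_pow, rootIdeal_monomial, bracketPow_span_singleton,
    Ideal.mem_span_singleton, monomial_dvd_monomial, one_ne_zero, false_or, one_dvd, and_true,
    Finsupp.le_def, Finsupp.smul_apply, Finsupp.mapRange_apply, smul_eq_mul]

end Cartier
end MvPolynomial

theorem stmt_8_general (p : ℕ) [Fact p.Prime] (k : Type*) [Field k] [CharP k p] [PerfectField k]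
    (d : ℕ) (a : Fin d → ℕ)
    (e : ℕ) (he : e = Nat.clog p (Finset.univ.sup a) + 1)
    (f : MvPolynomial (Fin d) k)
    (hf : f = monomial (Finsupp.equivFunOnFinite.symm a) 1) :
    HasLevel p f e ∧
    rootIdeal p e (f ^ (p ^ e - 1)) =
      Ideal.span {monomial (Finsupp.equivFunOnFinite.symm fun i => a i - 1) 1} := by
  have hp : p.Prime := Fact.out
  subst he
  have hmem_iff : ∀ e', 1 ≤ e' → (f ^ (p ^ e' - p) ∈
      bracketPow (p ^ e') (rootIdeal p e' (f ^ (p ^ e' - 1))) ↔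
        Nat.clog p (Finset.univ.sup a) < e') := fun e' he' => by
    rw [hf, monomial_pow_mem_bracketPow_rootIdeal_iff, Nat.clog_sup_lt_iff hp.one_lt he']
    refine forall_congr' fun i => ?_
    rw [Finsupp.equivFunOnFinite_symm_apply_apply]
    exact Nat.mul_sub_one_mul_div_le_iff hp.two_le (Nat.le_self_pow (by omega) p)
  refine ⟨⟨⟨le_add_self, (hmem_iff _ le_add_self).2 (Nat.lt_succ_self _)⟩,
    fun e' ⟨he', hmem⟩ => (hmem_iff e' he').1 hmem⟩, ?_⟩
  rw [hf, monomial_pow, one_pow, rootIdeal_monomial]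
  congr
  ext i
  simp only [Finsupp.mapRange_apply, Finsupp.smul_apply, Finsupp.equivFunOnFinite_symm_apply_apply,
    smul_eq_mul]
  refine Nat.sub_one_mul_div_of_le ((Finset.le_sup (Finset.mem_univ i)).trans ?_)
  exact (Nat.le_pow_clog hp.one_lt _).trans (Nat.pow_le_pow_right hp.pos (Nat.le_succ _))

/-- For a monomial `f = x₁^{a₁}⋯x_d^{a_d}` with all `aᵢ > 0` and `a = max aᵢ`, the level of
`f` is `e = ⌈log_p a⌉ + 1`, and `I_e(f^(p^e - 1)) = (x₁^{a₁-1}⋯x_d^{a_d-1})`. -/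
theorem stmt_8 (p : ℕ) [Fact p.Prime] (k : Type*) [Field k] [CharP k p] [PerfectField k]
    (d : ℕ) (a : Fin d → ℕ) (ha : ∀ i, 0 < a i)
    (e : ℕ) (he : e = Nat.clog p (Finset.univ.sup a) + 1)
    (f : MvPolynomial (Fin d) k)
    (hf : f = monomial (Finsupp.equivFunOnFinite.symm a) 1) :
    HasLevel p f e ∧
    rootIdeal p e (f ^ (p ^ e - 1)) =
      Ideal.span {monomial (Finsupp.equivFunOnFinite.symm fun i => a i - 1) 1} :=
  stmt_8_general p k d a e he f hf
end

section
/- Let k be a perfect field of prime characteristic p, let R = k[x₁,…,x_d], and let f ∈ R be nonzero. Suppose that for some e ≥ 1, writing f^{p^e−1} = Σ_α f_α^{p^e} x^α over exponent vectors α with all entries at most p^e−1, some coefficient f_β is a unit of R (equivalently, I_e(f^{p^e−1}) = R). Then f has level one, i.e., I_1(f^{p−1}) = R. -/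
open MvPolynomial

lemma pow_mem_bracketPow {R : Type*} [CommRing R] (p : ℕ) [Fact p.Prime] [CharP R p]
    (q m : ℕ) (J : Ideal R) {a : R} (ha : a ∈ bracketPow q J) :
    a ^ p ^ m ∈ bracketPow (q * p ^ m) J := by
  refine Submodule.span_induction ?_ ?_ ?_ ?_ ha
  · rintro x ⟨b, hb, rfl⟩
    simp only
    rw [← pow_mul]
    exact Ideal.subset_span ⟨b, hb, rfl⟩
  · rw [zero_pow (pow_ne_zero m (Nat.Prime.ne_zero Fact.out))]; exact Submodule.zero_mem _
  · intro x y _ _ hx hy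
    rw [add_pow_char_pow]
    exact Submodule.add_mem _ hx hy
  · intro r x _ hx
    rw [smul_eq_mul, mul_pow]
    exact Ideal.mul_mem_left _ _ hx

/-- If, for some `e ≥ 1`, some coefficient in the expansion of `f^(p^e - 1)` over the basis
of `R` as an `R^{p^e}`-module is a unit — equivalently `I_e(f^(p^e - 1)) = R` — then `f` has
level one, i.e. `I_1(f^(p - 1)) = R`. -/
theorem stmt_10 (p : ℕ) [Fact p.Prime] (k : Type*) [Field k] [CharP k p] [PerfectField k]
    (d : ℕ) (f : MvPolynomial (Fin d) k) (hf : f ≠ 0)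
    (e : ℕ) (he : 1 ≤ e)
    (h : rootIdeal p e (f ^ (p ^ e - 1)) = ⊤) :
    rootIdeal p 1 (f ^ (p - 1)) = ⊤ := by
  have hp : 2 ≤ p := (Fact.out (p := p.Prime)).two_le
  rw [eq_top_iff]
  rw [rootIdeal]
  refine le_sInf fun J hJ => ?_
  -- hJ : f ^ (p - 1) ∈ bracketPow (p ^ 1) J
  have key : f ^ (p ^ e - 1) ∈ bracketPow (p ^ e) J := by
    have h1 : (f ^ (p - 1)) ^ p ^ (e - 1) ∈ bracketPow (p ^ 1 * p ^ (e - 1)) J :=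
      pow_mem_bracketPow p (p ^ 1) (e - 1) J hJ
    rw [← pow_mul] at h1
    rw [show p ^ 1 * p ^ (e - 1) = p ^ e by
      rw [← pow_add]; congr 1; omega] at h1
    have harith : p ^ e - 1 = (p - 1) * p ^ (e - 1) + (p ^ (e - 1) - 1) := by
      have h2 : p ^ e = p * p ^ (e - 1) := by
        rw [← pow_succ']; congr 1; omega
      have h3 : 1 ≤ p ^ (e - 1) := Nat.one_le_pow _ _ (by omega)
      rw [h2, Nat.sub_one_mul]
      have h4 : p ^ (e - 1) ≤ p * p ^ (e - 1) := Nat.le_mul_of_pos_left _ (by omega)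
      omega
    rw [harith, pow_add]
    exact Ideal.mul_mem_right _ _ h1
  have := sInf_le (show J ∈ {J : Ideal _ | f ^ (p ^ e - 1) ∈ bracketPow (p ^ e) J} from key)
  rw [← rootIdeal, h] at this
  exact this
end

section
/- Let k be a perfect field of prime characteristic p, let R = k[x₁,…,x_d], and let f ∈ R be a nonzero polynomial whose support contains a squarefree monomial m such that some variable xᵢ divides m but divides no other monomial in the support of f. Then f has level one, i.e., I_1(f^{p−1}) = R. -/
open MvPolynomial

/-! Grade `k[x]` by exponents modulo `p`. For `α` with all `αᵢ < p` the component of residue `α`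
is `x^α · k[x^p]`, and `p`-th powers lie in the component of residue `0`; so the projection onto
the component of residue `α` is linear over `p`-th powers and maps `J^[p]` into `x^α J`.
For `α = (p-1)m`, writing `f = c x^m + h`, every binomial term `(c x^m)^j h^(p-1-j)` with
`j < p-1` has `xᵢ`-degree `j`, so the projection of `f^(p-1)` is `c^(p-1) x^α`. Cancelling `x^α`
puts the unit `c^(p-1)` in every `J` with `f^(p-1) ∈ J^[p]`. -/

namespace MvPolynomial

open Finsupp

variable {σ R : Type*} [CommRing R] {p : ℕ}

variable (p) in
noncomputable def residueWeight : σ → σ →₀ ZMod p := fun i => Finsupp.single i 1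

theorem weight_residueWeight_apply (δ : σ →₀ ℕ) (j : σ) :
    weight (residueWeight p) δ j = δ j := by
  classical
  rw [weight_apply, Finsupp.sum_apply, Finsupp.sum_eq_single j] <;>
    simp +contextual [residueWeight]

theorem le_of_weight_residueWeight_eq {α δ : σ →₀ ℕ} (hα : ∀ i, α i < p)
    (h : weight (residueWeight p) δ = weight (residueWeight p) α) : α ≤ δ := by
  intro i
  have hi := congr($h i)
  rw [weight_residueWeight_apply, weight_residueWeight_apply, ZMod.natCast_eq_natCast_iff',
    Nat.mod_eq_of_lt (hα i)] at hi
  exact hi ▸ Nat.mod_le (δ i) p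

theorem isWeightedHomogeneous_pow_expChar [ExpChar R p] (a : MvPolynomial σ R) :
    IsWeightedHomogeneous (residueWeight p) (a ^ p) 0 := by
  induction a using MvPolynomial.induction_on' with
  | monomial β r =>
    rw [monomial_pow]
    refine isWeightedHomogeneous_monomial _ _ _ ?_
    ext j
    simp
  | add a b ha hb => rw [add_pow_expChar]; exact ha.add hb

theorem weightedHomogeneousComponent_mul_of_isWeightedHomogeneous_zero {M : Type*}
    [AddCommMonoid M] {w : σ → M} {a : MvPolynomial σ R} (ha : IsWeightedHomogeneous w a 0)
    (n : M) (b : MvPolynomial σ R) :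
    weightedHomogeneousComponent w n (a * b) = a * weightedHomogeneousComponent w n b := by
  classical
  let _ := weightedGradedAlgebra R w
  simp_rw [← weightedDecomposition.decompose'_apply]
  exact DirectSum.coe_decompose_mul_of_left_mem_zero (weightedHomogeneousSubmodule R w) ha

theorem monomial_one_dvd_weightedHomogeneousComponent_residueWeight {α : σ →₀ ℕ}
    (hα : ∀ i, α i < p) (g : MvPolynomial σ R) :
    monomial α 1 ∣
      weightedHomogeneousComponent (residueWeight p) (weight (residueWeight p) α) g := by
  rw [← Ideal.mem_span_singleton, ← Set.image_singleton (f := fun s => monomial s (1 : R)),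
    mem_ideal_span_monomial_image]
  intro δ hδ
  exact ⟨α, rfl, le_of_weight_residueWeight_eq hα
    (weightedHomogeneousComponent_isWeightedHomogeneous _ _ (mem_support_iff.mp hδ))⟩

theorem weightedHomogeneousComponent_residueWeight_mem_of_mem_bracketPow [ExpChar R p]
    {α : σ →₀ ℕ} (hα : ∀ i, α i < p) {J : Ideal (MvPolynomial σ R)} {g : MvPolynomial σ R}
    (hg : g ∈ bracketPow p J) :
    weightedHomogeneousComponent (residueWeight p) (weight (residueWeight p) α) g ∈
      J * Ideal.span {monomial α 1} := by
  obtain ⟨n, c, a, rfl⟩ := Submodule.mem_span_set'.mp hg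
  rw [map_sum]
  refine Ideal.sum_mem _ fun j _ => ?_
  obtain ⟨b, hb, hab⟩ := (a j).2
  rw [smul_eq_mul, ← hab, mul_comm (c j),
    weightedHomogeneousComponent_mul_of_isWeightedHomogeneous_zero
      (isWeightedHomogeneous_pow_expChar b)]
  exact Ideal.mul_mem_mul (J.pow_mem_of_mem hb p (expChar_pos R p))
    (Ideal.mem_span_singleton.mpr
      (monomial_one_dvd_weightedHomogeneousComponent_residueWeight hα _))

theorem weightedHomogeneousComponent_residueWeight_pow {f : MvPolynomial σ R} {m : σ →₀ ℕ}
    {i : σ} (hmi : m i = 1) (hfi : ∀ m' ∈ f.support, m' ≠ m → m' i = 0) {n : ℕ} (hn : n < p) :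
    weightedHomogeneousComponent (residueWeight p) (weight (residueWeight p) (n • m)) (f ^ n) =
      monomial (n • m) (coeff m f ^ n) := by
  classical
  set c := coeff m f
  set w : σ → ℕ := Pi.single i 1
  have hlead : IsWeightedHomogeneous w (monomial m c) 1 :=
    isWeightedHomogeneous_monomial _ _ _ (by rw [weight_single_one_apply, hmi])
  have hrest : IsWeightedHomogeneous w (f - monomial m c) 0 := by
    intro δ hδ
    rw [coeff_sub, coeff_monomial] at hδ
    rw [weight_single_one_apply]
    by_cases h : δ = m
    · simp [h, c] at hδ
    · rw [if_neg (Ne.symm h), sub_zero] at hδ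
      exact hfi δ (mem_support_iff.mpr hδ) h
  rw [← add_sub_cancel (monomial m c) f, add_pow, map_sum, Finset.sum_eq_single n]
  · rw [Nat.sub_self, pow_zero, mul_one, Nat.choose_self, Nat.cast_one, mul_one, monomial_pow]
    exact weightedHomogeneousComponent_eq_self (isWeightedHomogeneous_monomial _ _ _ rfl)
  · intro j hj hjn
    have hjp : j < p := (Finset.mem_range_succ_iff.mp hj).trans_lt hn
    have hterm : IsWeightedHomogeneous w
        (monomial m c ^ j * (f - monomial m c) ^ (n - j) * (n.choose j : MvPolynomial σ R)) j := by
      simpa using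
        ((hlead.pow j).mul (hrest.pow (n - j))).mul (isWeightedHomogeneous_C w (n.choose j : R))
    refine weightedHomogeneousComponent_eq_zero' _ _ fun δ hδ hweight => ?_
    have hδi : δ i = j := by
      simpa [w, weight_single_one_apply] using hterm (mem_support_iff.mp hδ)
    have hres := congr($hweight i)
    rw [weight_residueWeight_apply, weight_residueWeight_apply, Finsupp.smul_apply, hmi,
      smul_eq_mul, mul_one, hδi, ZMod.natCast_eq_natCast_iff', Nat.mod_eq_of_lt hjp,
      Nat.mod_eq_of_lt hn] at hres
    exact hjn hres
  · simp

end MvPolynomial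

theorem stmt_12_general (p : ℕ) [Fact p.Prime] (k : Type*) [Field k] [CharP k p]
    (d : ℕ) (f : MvPolynomial (Fin d) k)
    (hm : ∃ m ∈ f.support, (∀ i, m i ≤ 1) ∧
      ∃ i, m i = 1 ∧ ∀ m' ∈ f.support, m' ≠ m → m' i = 0) :
    rootIdeal p 1 (f ^ (p - 1)) = ⊤ := by
  obtain ⟨m, hmf, hsf, i, hmi, hfi⟩ := hm
  have hp : p - 1 < p := Nat.sub_lt (Fact.out : p.Prime).pos one_pos
  have hα : ∀ j, ((p - 1) • m) j < p := fun j =>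
    (mul_le_of_le_one_right (Nat.zero_le _) (hsf j)).trans_lt hp
  rw [rootIdeal, sInf_eq_top]
  intro J (hJ : f ^ (p - 1) ∈ bracketPow (p ^ 1) J)
  rw [pow_one] at hJ
  obtain ⟨t, ht, hcomp⟩ := Ideal.mem_mul_span_singleton.mp <|
    weightedHomogeneousComponent_residueWeight_pow hmi hfi hp ▸
      weightedHomogeneousComponent_residueWeight_mem_of_mem_bracketPow hα hJ
  have htC : t = C (coeff m f ^ (p - 1)) := by
    refine mul_right_cancel₀ (monomial_eq_zero.not.mpr one_ne_zero) (hcomp.trans ?_)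
    rw [C_mul_monomial, mul_one]
  exact J.eq_top_of_isUnit_mem ht
    (htC ▸ (pow_ne_zero _ (mem_support_iff.mp hmf)).isUnit.map C)

/-- If the support of a nonzero `f ∈ k[x₁,…,x_d]` contains a squarefree monomial `m` such
that some variable `xᵢ` divides `m` but divides no other monomial of the support of `f`,
then `f` has level one, i.e. `I_1(f^(p-1)) = R`. -/
theorem stmt_12 (p : ℕ) [Fact p.Prime] (k : Type*) [Field k] [CharP k p] [PerfectField k]
    (d : ℕ) (f : MvPolynomial (Fin d) k) (hf : f ≠ 0)
    (hm : ∃ m ∈ f.support, (∀ i, m i ≤ 1) ∧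
      ∃ i, m i = 1 ∧ ∀ m' ∈ f.support, m' ≠ m → m' i = 0) :
    rootIdeal p 1 (f ^ (p - 1)) = ⊤ :=
  stmt_12_general p k d f hm
end

section
/- Let k be a perfect field of prime characteristic p, let t ≥ 1 be an integer with t ≤ min{d, p} and p ≡ 1 (mod t), and let f = x₁^t + x₂^t + ⋯ + x_d^t ∈ k[x₁,…,x_d]. Then f has level one, i.e., I_1(f^{p−1}) = R. -/
open MvPolynomial

/-! The operator `D = ∂₁^(p-1) ⋯ ∂ₜ^(p-1)` on `k[x₁, …, x_d]` is linear over the subring of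
`p`-th powers, because derivations kill `p`-th powers in characteristic `p`; hence `D` maps
`J^[p]` into `J` for every ideal `J`. Write `p - 1 = t s`. Since `f^(p-1)` is homogeneous of degree
`t (p-1)`, `D (f^(p-1))` is the constant `((p-1)!)^t` times the coefficient of `(x₁ ⋯ xₜ)^(p-1)` in
`f^(p-1)`, which is the multinomial coefficient `(p-1)! / (s!)^t`. Both factors are prime to `p`,
so `D (f^(p-1))` is a unit, and every `J` with `f^(p-1) ∈ J^[p]` is the unit ideal. -/

def powLinearEnds (R A : Type*) [CommSemiring R] [CommSemiring A] [Algebra R A] (p : ℕ) :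
    Submonoid (Module.End R A) where
  carrier := {φ | ∀ r u : A, φ (r * u ^ p) = φ r * u ^ p}
  one_mem' _ _ := rfl
  mul_mem' {φ ψ} hφ hψ r u := by
    simp only [Set.mem_ofPred_eq, Module.End.mul_apply] at *
    rw [hψ, hφ]

theorem Derivation.toLinearMap_mem_powLinearEnds {R A : Type*} [CommSemiring R] [CommSemiring A]
    [Algebra R A] {p : ℕ} [CharP A p] (D : Derivation R A A) :
    D.toLinearMap ∈ powLinearEnds R A p := by
  intro r u
  simp [Derivation.leibniz_pow, nsmul_eq_mul, mul_comm]

section PowLinear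

variable {R A : Type*} [CommSemiring R] [CommRing A] [Algebra R A] {p : ℕ}
  {φ : Module.End R A}

theorem map_mem_of_mem_bracketPow (hp : p ≠ 0) (hφ : φ ∈ powLinearEnds R A p) {J : Ideal A}
    {g : A} (hg : g ∈ bracketPow p J) : φ g ∈ J := by
  suffices ∀ r, φ (r * g) ∈ J by simpa using this 1
  induction hg using Submodule.span_induction with
  | mem x hx =>
    obtain ⟨u, hu, rfl⟩ := hx
    intro r
    rw [hφ r u]
    exact J.mul_mem_left _ (J.pow_mem_of_mem hu p (Nat.pos_of_ne_zero hp))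
  | zero => simp
  | add x y _ _ hx hy => intro r; rw [mul_add, map_add]; exact J.add_mem (hx r) (hy r)
  | smul a x _ hx => intro r; rw [smul_eq_mul, ← mul_assoc]; exact hx (r * a)

theorem rootIdeal_one_eq_top_of_isUnit (hp : p ≠ 0) (hφ : φ ∈ powLinearEnds R A p) {g : A}
    (hg : IsUnit (φ g)) : rootIdeal p 1 g = ⊤ := by
  rw [rootIdeal, sInf_eq_top]
  intro J hJ
  rw [Set.mem_ofPred_eq, pow_one] at hJ
  exact Ideal.eq_top_of_isUnit_mem J (map_mem_of_mem_bracketPow hp hφ hJ) hg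

end PowLinear

namespace MvPolynomial

variable {σ k : Type*} [CommSemiring k]

noncomputable def pderivProd (n : ℕ) (l : List σ) : Module.End k (MvPolynomial σ k) :=
  (l.map fun i => (pderiv i).toLinearMap ^ n).prod

theorem pderivProd_mem_powLinearEnds (p : ℕ) [CharP k p] (n : ℕ) (l : List σ) :
    pderivProd n l ∈ powLinearEnds k (MvPolynomial σ k) p :=
  Submonoid.list_prod_mem _ fun _ hφ => by
    obtain ⟨i, -, rfl⟩ := List.mem_map.mp hφ
    exact pow_mem (pderiv i).toLinearMap_mem_powLinearEnds n

theorem coeff_iterate_pderiv (i : σ) (n : ℕ) (h : MvPolynomial σ k) (m : σ →₀ ℕ) :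
    coeff m ((pderiv i)^[n] h) =
      coeff (m + Finsupp.single i n) h * ((m i + 1).ascFactorial n : ℕ) := by
  induction n generalizing h with
  | zero => simp
  | succ n ih =>
    rw [Function.iterate_succ_apply, ih, coeff_pderiv, add_assoc, ← Finsupp.single_add,
      Nat.ascFactorial_succ]
    simp only [Finsupp.add_apply, Finsupp.single_eq_same]
    push_cast
    ring

theorem coeff_pderivProd {l : List σ} (hl : l.Nodup) (n : ℕ) (h : MvPolynomial σ k)
    (m : σ →₀ ℕ) :
    coeff m (pderivProd n l h) = coeff (m + (l.map fun i => Finsupp.single i n).sum) h *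
      (l.map fun i => (((m i + 1).ascFactorial n : ℕ) : k)).prod := by
  induction l generalizing m with
  | nil => simp [pderivProd]
  | cons i l ih =>
    obtain ⟨hi, hl⟩ := List.nodup_cons.mp hl
    have hm : ∀ j ∈ l, (m + Finsupp.single i n) j = m j := fun j hj => by
      rw [Finsupp.add_apply, Finsupp.single_eq_of_ne (ne_of_mem_of_not_mem hj hi), add_zero]
    have hcons : pderivProd n (i :: l) h = (pderiv i)^[n] (pderivProd n l h) := by
      rw [pderivProd, List.map_cons, List.prod_cons, Module.End.mul_apply, Module.End.pow_apply]
      rfl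
    have hfactors : (l.map fun j => ((((m + Finsupp.single i n) j + 1).ascFactorial n : ℕ) : k))
        = l.map fun j => (((m j + 1).ascFactorial n : ℕ) : k) :=
      List.map_congr_left fun j hj => by rw [hm j hj]
    rw [hcons, coeff_iterate_pderiv, ih hl, hfactors, List.map_cons, List.sum_cons,
      List.map_cons, List.prod_cons, add_assoc, mul_assoc, mul_comm (List.prod _)]

open scoped Nat in
theorem pderivProd_eq_C_of_isHomogeneous {l : List σ} (hl : l.Nodup) (n : ℕ)
    {h : MvPolynomial σ k} (hh : h.IsHomogeneous (l.length * n)) :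
    pderivProd n l h =
      C (coeff (l.map fun i => Finsupp.single i n).sum h * (n ! : k) ^ l.length) := by
  classical
  ext m
  rw [coeff_pderivProd hl, coeff_C]
  split_ifs with hm
  · subst hm
    simp [Nat.one_ascFactorial]
  · have hdeg : Finsupp.degree (l.map fun i => Finsupp.single i n).sum = l.length * n := by
      simp [map_list_sum, Function.comp_def]
    have hm0 : m.degree ≠ 0 := mt (Finsupp.degree_eq_zero_iff m).mp (Ne.symm hm)
    rw [hh.coeff_eq_zero (by rw [map_add, hdeg]; omega), zero_mul]

theorem coeff_smul_sum_X_pow_pow [Fintype σ] {t : ℕ} (ht : t ≠ 0) (m : σ →₀ ℕ) :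
    coeff (t • m) ((∑ i, X i ^ t : MvPolynomial σ k) ^ m.degree) = m.multinomial := by
  have hexpand : (∑ i, X i ^ t : MvPolynomial σ k) = expand t (∑ i, X i) := by simp [map_sum]
  rw [hexpand, ← map_pow, coeff_expand_smul _ ht, coeff_sum_X_pow_of_fintype, if_pos (by rfl)]

end MvPolynomial

open scoped Nat in
theorem Finsupp.multinomial_dvd_factorial_degree {α : Type*} (m : α →₀ ℕ) :
    m.multinomial ∣ m.degree ! :=
  Dvd.intro_left _ (Nat.multinomial_spec m.support m)

open scoped Nat in
theorem CharP.natCast_ne_zero_of_dvd_factorial (k : Type*) [AddMonoidWithOne k] {p : ℕ}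
    [CharP k p] (hp : p.Prime) {a n : ℕ} (hn : n < p) (ha : a ∣ n !) : (a : k) ≠ 0 := by
  rw [Ne, CharP.cast_eq_zero_iff k p]
  exact fun hpa => absurd (hp.dvd_factorial.mp (hpa.trans ha)) (by omega)

theorem stmt_15_general (p : ℕ) [Fact p.Prime] (k : Type*) [Field k] [CharP k p]
    (d : ℕ) (t : ℕ) (ht1 : 1 ≤ t) (htd : t ≤ d) (hmod : p ≡ 1 [MOD t])
    (f : MvPolynomial (Fin d) k) (hf : f = ∑ i, X i ^ t) :
    rootIdeal p 1 (f ^ (p - 1)) = ⊤ := by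
  have hp : p.Prime := Fact.out
  obtain ⟨s, hs⟩ : t ∣ p - 1 := (Nat.modEq_iff_dvd' hp.one_le).mp hmod.symm
  set l := (List.finRange d).take t
  have hl : l.Nodup := (List.nodup_finRange d).sublist (List.take_sublist _ _)
  have hlen : l.length = t := by simp [l, htd]
  set m := (l.map fun i => Finsupp.single i s).sum
  have hm : m.degree = p - 1 := by simp [m, map_list_sum, Function.comp_def, hlen, hs]
  have hA : (l.map fun i => Finsupp.single i (p - 1)).sum = t • m := by
    simp [m, List.smul_sum, hs, Function.comp_def]
  have hcoeff : coeff (t • m) (f ^ (p - 1)) = m.multinomial := by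
    rw [hf, ← hm, coeff_smul_sum_X_pow_pow (by omega)]
  have hhom : (f ^ (p - 1)).IsHomogeneous (l.length * (p - 1)) := by
    rw [hlen, hf]
    exact (IsHomogeneous.sum _ _ _ fun i _ => isHomogeneous_X_pow i t).pow _
  have hD : pderivProd (p - 1) l (f ^ (p - 1)) =
      C (m.multinomial * ((p - 1).factorial : k) ^ t) := by
    rw [pderivProd_eq_C_of_isHomogeneous hl _ hhom, hA, hcoeff, hlen]
  refine rootIdeal_one_eq_top_of_isUnit hp.ne_zero (pderivProd_mem_powLinearEnds p (p - 1) l) ?_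
  have hlt : p - 1 < p := Nat.sub_lt hp.pos one_pos
  rw [hD]
  refine (isUnit_iff_ne_zero.mpr (mul_ne_zero ?_ (pow_ne_zero _ ?_))).map C
  · exact CharP.natCast_ne_zero_of_dvd_factorial k hp hlt (hm ▸ m.multinomial_dvd_factorial_degree)
  · exact CharP.natCast_ne_zero_of_dvd_factorial k hp hlt dvd_rfl

/-- If `1 ≤ t ≤ min{d, p}` and `p ≡ 1 (mod t)`, then the diagonal hypersurface
`f = x₁^t + ⋯ + x_d^t` has level one, i.e. `I_1(f^(p-1)) = R`. -/
theorem stmt_15 (p : ℕ) [Fact p.Prime] (k : Type*) [Field k] [CharP k p] [PerfectField k]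
    (d : ℕ) (t : ℕ) (ht1 : 1 ≤ t) (htd : t ≤ d) (htp : t ≤ p) (hmod : p ≡ 1 [MOD t])
    (f : MvPolynomial (Fin d) k) (hf : f = ∑ i, X i ^ t) :
    rootIdeal p 1 (f ^ (p - 1)) = ⊤ :=
  stmt_15_general p k d t ht1 htd hmod f hf
end

section
/- Let k be a perfect field of characteristic 2 and let f ∈ k[x₁,…,x_d] be a nonzero regular polynomial, i.e., the Tjurina ideal (f, ∂f/∂x₁, …, ∂f/∂x_d) equals the unit ideal. Then f has level one, i.e., I_1(f) = R. -/
open MvPolynomial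

/-- Over a perfect field of characteristic `2`, a nonzero regular polynomial `f` (i.e. one
whose Tjurina ideal `(f, ∂f/∂x₁, …, ∂f/∂x_d)` is the unit ideal) has level one,
i.e. `I_1(f) = R`. -/
theorem stmt_17 (k : Type*) [Field k] [CharP k 2] [PerfectField k]
    (d : ℕ) (f : MvPolynomial (Fin d) k) (hf : f ≠ 0)
    (hreg : Ideal.span ({f} ∪ Set.range fun i => pderiv i f) = ⊤) :
    rootIdeal 2 1 f = ⊤ := by
  refine le_antisymm le_top (le_sInf ?_)
  intro J hJ
  suffices h : J = ⊤ by simp [h]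
  have h2 : (2 : MvPolynomial (Fin d) k) = 0 := by
    exact_mod_cast CharP.cast_eq_zero (MvPolynomial (Fin d) k) 2
  have key : ∀ x ∈ bracketPow (2 ^ 1) J, x ∈ J ∧ ∀ i, pderiv i x ∈ J := by
    intro x hx
    refine Submodule.span_induction ?_ ?_ ?_ ?_ hx
    · rintro y ⟨g, hg, rfl⟩
      refine ⟨?_, fun i => ?_⟩
      · simp only [pow_one, pow_two]
        exact Ideal.mul_mem_left _ _ hg
      · simp only [pow_one, pow_two, pderiv_mul]
        have : pderiv i g * g + g * pderiv i g = 2 * (g * pderiv i g) := by ring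
        rw [this, h2, zero_mul]
        exact J.zero_mem
    · simp
    · intro a b _ _ ha hb
      exact ⟨J.add_mem ha.1 hb.1, fun i => by rw [map_add]; exact J.add_mem (ha.2 i) (hb.2 i)⟩
    · intro a x _ hx
      refine ⟨J.smul_mem a hx.1, fun i => ?_⟩
      rw [smul_eq_mul, pderiv_mul]
      exact J.add_mem (J.mul_mem_left _ hx.1) (J.mul_mem_left _ (hx.2 i))
  have hfJ := key f hJ
  have hle : Ideal.span ({f} ∪ Set.range fun i => pderiv i f) ≤ J := by
    rw [Ideal.span_le]
    rintro x (rfl | ⟨i, rfl⟩)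
    · exact hfJ.1
    · exact hfJ.2 i
  rw [hreg] at hle
  exact top_le_iff.mp hle
end
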